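/- For real numbers 0 < a < b, the ratio of Gamma values |Γ(a + iy)/Γ(b + iy)| is bounded uniformly in y ∈ ℝ by a constant depending only on a and b. -/

import Mathlib

/-!
For `0 < re u` and `0 < re v` the Beta integral gives `Γ(u) / Γ(u + v) = B(u, v) / Γ(v)`, and
`‖B(u, v)‖ ≤ B(re u, re v)` because `‖t ^ u‖ = t ^ re u` for `t > 0`. With `u = a + iy` and
`v = b - a`, the right-hand side `B(a, b - a) / |Γ(b - a)|` no longer depends on `y`.
-/

open Set

namespace Complex

lemma norm_betaIntegrand (u v : ℂ) {x : ℝ} (hx : x ∈ Ioo (0 : ℝ) 1) :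
    ‖(x : ℂ) ^ (u - 1) * (1 - (x : ℂ)) ^ (v - 1)‖ = x ^ (u.re - 1) * (1 - x) ^ (v.re - 1) := by
  have h1x : 1 - (x : ℂ) = ((1 - x : ℝ) : ℂ) := by push_cast; rfl
  rw [norm_mul, norm_cpow_eq_rpow_re_of_pos hx.1, h1x,
    norm_cpow_eq_rpow_re_of_pos (sub_pos.2 hx.2)]
  simp

lemma betaIntegrand_ofReal (s t : ℝ) {x : ℝ} (hx : x ∈ Ioo (0 : ℝ) 1) :
    (x : ℂ) ^ ((s : ℂ) - 1) * (1 - (x : ℂ)) ^ ((t : ℂ) - 1) =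
      ((x ^ (s - 1) * (1 - x) ^ (t - 1) : ℝ) : ℂ) := by
  have h1x : 1 - (x : ℂ) = ((1 - x : ℝ) : ℂ) := by push_cast; rfl
  rw [h1x, ofReal_mul, ofReal_cpow hx.1.le, ofReal_cpow (sub_pos.2 hx.2).le]
  push_cast
  rfl

lemma norm_betaIntegral_le (u v : ℂ) : ‖betaIntegral u v‖ ≤ ‖betaIntegral u.re v.re‖ := by
  set g : ℝ → ℝ := fun x ↦ x ^ (u.re - 1) * (1 - x) ^ (v.re - 1)
  have h_norm : ∫ x in (0 : ℝ)..1, ‖(x : ℂ) ^ (u - 1) * (1 - (x : ℂ)) ^ (v - 1)‖ =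
      ∫ x in (0 : ℝ)..1, g x :=
    intervalIntegral.integral_congr_Ioo_of_le zero_le_one fun x hx ↦ norm_betaIntegrand u v hx
  have h_real : betaIntegral u.re v.re = ((∫ x in (0 : ℝ)..1, g x : ℝ) : ℂ) := by
    rw [betaIntegral, ← intervalIntegral.integral_ofReal]
    exact intervalIntegral.integral_congr_Ioo_of_le zero_le_one fun x hx ↦
      betaIntegrand_ofReal u.re v.re hx
  calc ‖betaIntegral u v‖
      ≤ ∫ x in (0 : ℝ)..1, ‖(x : ℂ) ^ (u - 1) * (1 - (x : ℂ)) ^ (v - 1)‖ :=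
        intervalIntegral.norm_integral_le_integral_norm zero_le_one
    _ = ∫ x in (0 : ℝ)..1, g x := h_norm
    _ ≤ ‖betaIntegral u.re v.re‖ := by rw [h_real, norm_real]; exact le_abs_self _

lemma Gamma_div_Gamma_add_eq_betaIntegral_div {u v : ℂ} (hu : 0 < u.re) (hv : 0 < v.re) :
    Gamma u / Gamma (u + v) = betaIntegral u v / Gamma v := by
  have hΓv := Gamma_ne_zero_of_re_pos hv
  have hΓuv := Gamma_ne_zero_of_re_pos (s := u + v) (by simpa using add_pos hu hv)
  rw [div_eq_div_iff hΓuv hΓv, Gamma_mul_Gamma_eq_betaIntegral hu hv, mul_comm]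

lemma norm_Gamma_div_Gamma_add_le {u v : ℂ} (hu : 0 < u.re) (hv : 0 < v.re) :
    ‖Gamma u / Gamma (u + v)‖ ≤ ‖betaIntegral u.re v.re‖ / ‖Gamma v‖ := by
  rw [Gamma_div_Gamma_add_eq_betaIntegral_div hu hv, norm_div]
  gcongr
  exact norm_betaIntegral_le u v

end Complex

/-- For `0 < a < b`, `|Γ(a + iy)/Γ(b + iy)|` is bounded uniformly in `y ∈ ℝ`. -/
theorem stmt_8 (a b : ℝ) (ha : 0 < a) (hab : a < b) :
    ∃ C : ℝ, ∀ y : ℝ,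
      ‖Complex.Gamma ((a : ℂ) + y * Complex.I) /
        Complex.Gamma ((b : ℂ) + y * Complex.I)‖ ≤ C := by
  refine ⟨‖Complex.betaIntegral a (b - a)‖ / ‖Complex.Gamma (b - a)‖, fun y ↦ ?_⟩
  have hsplit : (b : ℂ) + y * Complex.I = (a + y * Complex.I) + ((b - a : ℝ) : ℂ) := by
    push_cast; ring
  have hu : 0 < ((a : ℂ) + y * Complex.I).re := by simpa using ha
  have hv : 0 < ((b - a : ℝ) : ℂ).re := by simpa using hab
  rw [hsplit]
  convert Complex.norm_Gamma_div_Gamma_add_le hu hv using 3 <;> simp
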